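/- arXiv:2210.10868 — 5 statements merged into one kernel-verified Lean document; each statement's English description precedes it below -/
import Mathlib

section
/- Let ū = (ū₁,…,ū_m) ∈ ℝ^m have all entries positive, let X ∈ ℝ^{m×m} be diagonal positive definite, let L ∈ ℝ^{m×(2n)}, and let z ∈ ℝ^{2n} satisfy |L_{(i)} z| ≤ ū_i for every i ∈ {1,…,m}, where L_{(i)} denotes the i-th row of L. Then for every u ∈ ℝ^m one has dz_ū(u)ᵀ X (dz_ū(u) + u + L z) ≤ 0. -/
open Matrix

/-! Since `X` is diagonal with positive entries, the quadratic form is a positively weighted sum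
of the scalar products `dz_i * (sat_i + (L z)_i)`. Each is nonpositive: `dz_i` vanishes unless
`u_i` is saturated, and then `sat_i = ± ū_i` dominates `(L z)_i`, so `sat_i + (L z)_i` has the
sign of `u_i`, opposite to that of `dz_i`. -/

noncomputable def satv {m : ℕ} (ubar : Fin m → ℝ) (v : Fin m → ℝ) : Fin m → ℝ :=
  fun i => Real.sign (v i) * min |v i| (ubar i)

noncomputable def dzv {m : ℕ} (ubar : Fin m → ℝ) (v : Fin m → ℝ) : Fin m → ℝ :=
  fun i => satv ubar v i - v i

theorem Matrix.IsDiag.dotProduct_mulVec_nonpos {ι R : Type*} [Fintype ι] [DecidableEq ι]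
    [CommRing R] [PartialOrder R] [IsOrderedRing R] {X : Matrix ι ι R} (hX : X.IsDiag)
    (hXnonneg : ∀ i, 0 ≤ X i i) {x y : ι → R} (hxy : ∀ i, x i * y i ≤ 0) :
    x ⬝ᵥ (X *ᵥ y) ≤ 0 := by
  rw [← hX.diagonal_diag]
  refine Finset.sum_nonpos fun i _ => ?_
  rw [mulVec_diagonal, mul_left_comm]
  exact mul_nonpos_of_nonneg_of_nonpos (hXnonneg i) (hxy i)

theorem sign_mul_min_abs_sub_mul_add_nonpos {a v w : ℝ} (hw : |w| ≤ a) :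
    (Real.sign v * min |v| a - v) * (Real.sign v * min |v| a + w) ≤ 0 := by
  obtain ⟨hwa, haw⟩ := abs_le.mp hw
  rcases lt_trichotomy v 0 with hv | rfl | hv
  · rw [Real.sign_of_neg hv, abs_of_neg hv]
    rcases le_total (-v) a with h | h
    · rw [min_eq_left h]; nlinarith
    · rw [min_eq_right h]; nlinarith
  · simp
  · rw [Real.sign_of_pos hv, abs_of_pos hv]
    rcases le_total v a with h | h
    · rw [min_eq_left h]; nlinarith
    · rw [min_eq_right h]; nlinarith

theorem dzv_add_self {m : ℕ} (ubar v : Fin m → ℝ) : dzv ubar v + v = satv ubar v := by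
  ext i
  simp [dzv]

theorem dzv_mul_satv_add_nonpos {m : ℕ} {ubar : Fin m → ℝ} (v : Fin m → ℝ) {i : Fin m} {w : ℝ}
    (hw : |w| ≤ ubar i) : dzv ubar v i * (satv ubar v i + w) ≤ 0 :=
  sign_mul_min_abs_sub_mul_add_nonpos hw

theorem statement0_general (m n : ℕ) (ubar : Fin m → ℝ)
    (X : Matrix (Fin m) (Fin m) ℝ) (hXdiag : X.IsDiag) (hXpos : X.PosDef)
    (L : Matrix (Fin m) (Fin (2 * n)) ℝ) (z : Fin (2 * n) → ℝ)
    (hz : ∀ i, |L i ⬝ᵥ z| ≤ ubar i) :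
    ∀ u : Fin m → ℝ, dzv ubar u ⬝ᵥ (X *ᵥ (dzv ubar u + u + L *ᵥ z)) ≤ 0 := by
  intro u
  rw [dzv_add_self]
  exact hXdiag.dotProduct_mulVec_nonpos (fun _ => hXpos.diag_pos.le)
    fun i => dzv_mul_satv_add_nonpos u (hz i)

/-- generalized sector condition. If `ū` has positive entries, `X` is a
diagonal positive definite `m × m` matrix, `L ∈ ℝ^{m × 2n}` and `z ∈ ℝ^{2n}` satisfies
`|L_(i) z| ≤ ū_i` for all `i`, then for every `u ∈ ℝ^m`,
`dz_ū(u)ᵀ X (dz_ū(u) + u + L z) ≤ 0`. -/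
theorem statement0 (m n : ℕ) (ubar : Fin m → ℝ) (hubar : ∀ i, 0 < ubar i)
    (X : Matrix (Fin m) (Fin m) ℝ) (hXdiag : X.IsDiag) (hXpos : X.PosDef)
    (L : Matrix (Fin m) (Fin (2 * n)) ℝ) (z : Fin (2 * n) → ℝ)
    (hz : ∀ i, |L i ⬝ᵥ z| ≤ ubar i) :
    ∀ u : Fin m → ℝ, dzv ubar u ⬝ᵥ (X *ᵥ (dzv ubar u + u + L *ᵥ z)) ≤ 0 :=
  statement0_general m n ubar X hXdiag hXpos L z hz
end

section
/- Let μ̄, σ₁,…,σ_q be positive reals, R_i ∈ 𝕊^{n_i}₊ for i = 1,…,q, W ∈ 𝕊ⁿ₊, and Z, J ∈ ℝ^{m×n}. Define L := [Z W^{-1} J] ∈ ℝ^{m×(2n)}, R(τ) := ⊕_{i=1}^q e^{σ_i τ_i} R_i, P̂(τ) := W^{-1} ⊕ R(τ), 𝓛 := {x̄ ∈ ℝ^{2n} : |L_{(i)} x̄| ≤ ū_i for i = 1,…,m}, and Q_μ̄ := {(x̄, τ) ∈ ℝ^{2n} × T : x̄ᵀ P̂(τ) x̄ ≤ μ̄}.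 If for every i ∈ {1,…,m} the symmetric block matrix [[W, 0, Z_{(i)}ᵀ], [0, ⊕_{j=1}^q R_j, J_{(i)}ᵀ], [Z_{(i)}, J_{(i)}, ū_i²/μ̄]] is positive semidefinite, then Q_μ̄ ⊆ 𝓛 × T. -/
open Matrix

/-! Substitute `y = (W⁻¹ x₁, x₂)`. Then `L_(i) x̄ = b ⬝ y` for the border `b = (Z_(i), J_(i))` of
the `i`-th LMI, while `yᵀ (W ⊕ ⊕ⱼ Rⱼ) y = x₁ᵀ W⁻¹ x₁ + x₂ᵀ (⊕ⱼ Rⱼ) x₂ ≤ x̄ᵀ P̂(τ) x̄ ≤ μ̄` because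
`e^{σⱼ τⱼ} ≥ 1` on `T`. Positive semidefiniteness of the bordered matrix `[[A, b], [bᵀ, c]]` makes
`t ↦ c t² + 2 (b ⬝ y) t + yᵀ A y` nonnegative, so its discriminant gives
`(b ⬝ y)² ≤ c · yᵀ A y ≤ (ūᵢ² / μ̄) · μ̄ = ūᵢ²`. -/

namespace Matrix

section Quadratic

variable {R : Type*} [CommRing R] {m n : Type*} [Fintype m] [Fintype n]

theorem sumElim_dotProduct_fromBlocks_zero_mulVec (A : Matrix m m R) (D : Matrix n n R)
    (u : m → R) (v : n → R) :
    Sum.elim u v ⬝ᵥ (fromBlocks A 0 0 D *ᵥ Sum.elim u v) = u ⬝ᵥ (A *ᵥ u) + v ⬝ᵥ (D *ᵥ v) := by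
  simp [fromBlocks_mulVec, sumElim_dotProduct_sumElim]

theorem sumElim_dotProduct_fromBlocks_replicate_mulVec (A : Matrix n n R) (b : n → R)
    (c t : R) (y : n → R) :
    Sum.elim y (fun _ => t) ⬝ᵥ
        (fromBlocks A (replicateCol (Fin 1) b) (replicateRow (Fin 1) b) (of fun _ _ => c) *ᵥ
          Sum.elim y (fun _ => t)) =
      c * (t * t) + 2 * (b ⬝ᵥ y) * t + y ⬝ᵥ (A *ᵥ y) := by
  have hcol : replicateCol (Fin 1) b *ᵥ (fun _ => t) = t • b := by
    ext; simp [mulVec, dotProduct, mul_comm]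
  have hrow : replicateRow (Fin 1) b *ᵥ y = fun _ => b ⬝ᵥ y := rfl
  have hc : (of fun _ _ => c : Matrix (Fin 1) (Fin 1) R) *ᵥ (fun _ => t) = fun _ => c * t := by
    ext; simp [mulVec, dotProduct]
  rw [fromBlocks_mulVec, Sum.elim_comp_inl, Sum.elim_comp_inr, sumElim_dotProduct_sumElim, hcol,
    hrow, hc, dotProduct_add, dotProduct_smul, dotProduct_comm y b]
  simp only [dotProduct, smul_eq_mul, Finset.univ_unique, Fin.default_eq_zero, Fin.isValue,
    Pi.add_apply, Finset.sum_const, Finset.card_singleton, one_smul]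
  ring

theorem dotProduct_inv_mulVec_eq [DecidableEq n] {W : Matrix n n R} (hW : IsUnit W.det)
    (x : n → R) : x ⬝ᵥ (W⁻¹ *ᵥ x) = (W⁻¹ *ᵥ x) ⬝ᵥ (W *ᵥ (W⁻¹ *ᵥ x)) := by
  rw [mulVec_mulVec, mul_nonsing_inv _ hW, one_mulVec, dotProduct_comm]

end Quadratic

theorem sq_dotProduct_le_of_posSemidef_fromBlocks_replicate {n : Type*} [Fintype n]
    {A : Matrix n n ℝ} {b : n → ℝ} {c : ℝ}
    (h : (fromBlocks A (replicateCol (Fin 1) b) (replicateRow (Fin 1) b)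
      (of fun _ _ => c)).PosSemidef) (y : n → ℝ) :
    (b ⬝ᵥ y) ^ 2 ≤ c * (y ⬝ᵥ (A *ᵥ y)) := by
  have hdiscrim := discrim_le_zero fun t => by
    simpa [sumElim_dotProduct_fromBlocks_replicate_mulVec] using
      h.dotProduct_mulVec_nonneg (Sum.elim y fun _ => t)
  rw [discrim] at hdiscrim
  linarith

section BlockDiagonal

variable {o : Type*} [Fintype o] [DecidableEq o] {m : o → Type*} [∀ i, Fintype (m i)]

theorem dotProduct_blockDiagonal'_mulVec {R : Type*} [CommRing R]
    (M : ∀ i, Matrix (m i) (m i) R) (v : (Σ i, m i) → R) :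
    v ⬝ᵥ (blockDiagonal' M *ᵥ v) = ∑ i, (fun a => v ⟨i, a⟩) ⬝ᵥ (M i *ᵥ fun a => v ⟨i, a⟩) := by
  simp only [dotProduct, mulVec, ← Finset.univ_sigma_univ, Finset.sum_sigma]
  refine Finset.sum_congr rfl fun i _ => Finset.sum_congr rfl fun a _ => ?_
  rw [Finset.sum_eq_single_of_mem i (Finset.mem_univ i)]
  · simp [blockDiagonal'_apply_eq]
  · intro j _ hj
    exact Finset.sum_eq_zero fun b _ => by rw [blockDiagonal'_apply_ne _ _ _ (Ne.symm hj), zero_mul]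

theorem dotProduct_blockDiagonal'_mulVec_le_smul {M : ∀ i, Matrix (m i) (m i) ℝ}
    (hM : ∀ i, (M i).PosSemidef) {a : o → ℝ} (ha : ∀ i, 1 ≤ a i) (v : (Σ i, m i) → ℝ) :
    v ⬝ᵥ (blockDiagonal' M *ᵥ v) ≤ v ⬝ᵥ (blockDiagonal' (fun i => a i • M i) *ᵥ v) := by
  rw [dotProduct_blockDiagonal'_mulVec, dotProduct_blockDiagonal'_mulVec]
  gcongr with i
  rw [smul_mulVec, dotProduct_smul, smul_eq_mul]
  exact le_mul_of_one_le_left (by simpa using (hM i).dotProduct_mulVec_nonneg _) (ha i)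

end BlockDiagonal

end Matrix

theorem statement2_general (q m : ℕ) (nd : Fin q → ℕ)
    (T2 : Fin q → ℝ)
    (ubar : Fin m → ℝ) (hubar : ∀ i, 0 < ubar i)
    (μ : ℝ) (hμ : 0 < μ) (σ : Fin q → ℝ) (hσ : ∀ i, 0 < σ i)
    (R : (i : Fin q) → Matrix (Fin (nd i)) (Fin (nd i)) ℝ) (hR : ∀ i, (R i).PosDef)
    (W : Matrix ((i : Fin q) × Fin (nd i)) ((i : Fin q) × Fin (nd i)) ℝ) (hW : W.PosDef)
    (Z J : Matrix (Fin m) ((i : Fin q) × Fin (nd i)) ℝ)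
    (hLMI : ∀ i : Fin m,
      (Matrix.fromBlocks
        (Matrix.fromBlocks W 0 0 (Matrix.blockDiagonal' R))
        (Matrix.replicateCol (Fin 1) (Sum.elim (Z i) (J i)))
        (Matrix.replicateRow (Fin 1) (Sum.elim (Z i) (J i)))
        (Matrix.of fun _ _ => ubar i ^ 2 / μ)).PosSemidef) :
    ∀ (x : ((i : Fin q) × Fin (nd i)) ⊕ ((i : Fin q) × Fin (nd i)) → ℝ) (τ : Fin q → ℝ),
      (∀ i, τ i ∈ Set.Icc 0 (T2 i)) →
      x ⬝ᵥ ((Matrix.fromBlocks W⁻¹ 0 0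
          (Matrix.blockDiagonal' fun i => Real.exp (σ i * τ i) • R i)) *ᵥ x) ≤ μ →
      ∀ i : Fin m, |Matrix.fromCols (Z * W⁻¹) J i ⬝ᵥ x| ≤ ubar i := by
  intro x τ hτ hx i
  rw [← Sum.elim_comp_inl_inr x] at hx ⊢
  set y := Sum.elim (W⁻¹ *ᵥ (x ∘ Sum.inl)) (x ∘ Sum.inr)
  have hy : y ⬝ᵥ (fromBlocks W 0 0 (blockDiagonal' R) *ᵥ y) ≤ μ := by
    refine le_trans ?_ hx
    rw [sumElim_dotProduct_fromBlocks_zero_mulVec, sumElim_dotProduct_fromBlocks_zero_mulVec,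
      dotProduct_inv_mulVec_eq hW.det_pos.ne'.isUnit]
    gcongr
    exact dotProduct_blockDiagonal'_mulVec_le_smul (fun j => (hR j).posSemidef)
      (fun j => Real.one_le_exp (mul_nonneg (hσ j).le (hτ j).1)) _
  have hL : fromCols (Z * W⁻¹) J i ⬝ᵥ Sum.elim (x ∘ Sum.inl) (x ∘ Sum.inr) =
      Sum.elim (Z i) (J i) ⬝ᵥ y := by
    change Sum.elim ((Z * W⁻¹) i) (J i) ⬝ᵥ _ = _
    rw [sumElim_dotProduct_sumElim, sumElim_dotProduct_sumElim, dotProduct_mulVec]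
    rfl
  have hsq := sq_dotProduct_le_of_posSemidef_fromBlocks_replicate (hLMI i) y
  refine abs_le_of_sq_le_sq (hL ▸ hsq.trans ?_) (hubar i).le
  calc ubar i ^ 2 / μ * (y ⬝ᵥ (fromBlocks W 0 0 (blockDiagonal' R) *ᵥ y))
      ≤ ubar i ^ 2 / μ * μ := by gcongr
    _ = ubar i ^ 2 := div_mul_cancel₀ _ hμ.ne'

/-- Lemma on the inclusion `Q_μ̄ ⊆ 𝓛 × T`.
The state space `ℝⁿ` with `n = n₁ + ⋯ + n_q` is modeled by the index type
`(i : Fin q) × Fin (nd i)`; `ℝ^{2n}` by the sum of two copies of it.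
`R(τ) = ⊕ᵢ e^{σᵢ τᵢ} Rᵢ`, `P̂(τ) = W⁻¹ ⊕ R(τ)`, `L = [Z W⁻¹  J]`.
If for every `i ∈ {1,…,m}` the block matrix
`[[W, 0, Z_(i)ᵀ], [0, ⊕ⱼ Rⱼ, J_(i)ᵀ], [Z_(i), J_(i), ūᵢ²/μ̄]]` is positive semidefinite,
then every `(x̄, τ)` with `τ ∈ T` and `x̄ᵀ P̂(τ) x̄ ≤ μ̄` satisfies `|L_(i) x̄| ≤ ūᵢ` for all `i`. -/
theorem statement2 (q m : ℕ) (hq : 0 < q) (nd : Fin q → ℕ) (hnd : ∀ i, 0 < nd i)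
    (T2 : Fin q → ℝ) (hT2 : ∀ i, 0 < T2 i)
    (ubar : Fin m → ℝ) (hubar : ∀ i, 0 < ubar i)
    (μ : ℝ) (hμ : 0 < μ) (σ : Fin q → ℝ) (hσ : ∀ i, 0 < σ i)
    (R : (i : Fin q) → Matrix (Fin (nd i)) (Fin (nd i)) ℝ) (hR : ∀ i, (R i).PosDef)
    (W : Matrix ((i : Fin q) × Fin (nd i)) ((i : Fin q) × Fin (nd i)) ℝ) (hW : W.PosDef)
    (Z J : Matrix (Fin m) ((i : Fin q) × Fin (nd i)) ℝ)
    (hLMI : ∀ i : Fin m,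
      (Matrix.fromBlocks
        (Matrix.fromBlocks W 0 0 (Matrix.blockDiagonal' R))
        (Matrix.replicateCol (Fin 1) (Sum.elim (Z i) (J i)))
        (Matrix.replicateRow (Fin 1) (Sum.elim (Z i) (J i)))
        (Matrix.of fun _ _ => ubar i ^ 2 / μ)).PosSemidef) :
    ∀ (x : ((i : Fin q) × Fin (nd i)) ⊕ ((i : Fin q) × Fin (nd i)) → ℝ) (τ : Fin q → ℝ),
      (∀ i, τ i ∈ Set.Icc 0 (T2 i)) →
      x ⬝ᵥ ((Matrix.fromBlocks W⁻¹ 0 0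
          (Matrix.blockDiagonal' fun i => Real.exp (σ i * τ i) • R i)) *ᵥ x) ≤ μ →
      ∀ i : Fin m, |Matrix.fromCols (Z * W⁻¹) J i ⬝ᵥ x| ≤ ubar i :=
  statement2_general q m nd T2 ubar hubar μ hμ σ hσ R hR W hW Z J hLMI
end

section
/- Let μ̄ > 0, R_i ∈ 𝕊^{n_i}₊ for i = 1,…,q, W ∈ 𝕊ⁿ₊, Z, J ∈ ℝ^{m×n}, and set R̂ := ⊕_{i=1}^q R_i, P̂(0) := W^{-1} ⊕ R̂, and L := [Z W^{-1} J] ∈ ℝ^{m×(2n)}. If for an index i ∈ {1,…,m} the symmetric block matrix [[W, 0, Z_{(i)}ᵀ], [0, R̂, J_{(i)}ᵀ], [Z_{(i)}, J_{(i)}, ū_i²/μ̄]] is positive semidefinite, then (1/μ̄) P̂(0) − (1/ū_i²) L_{(i)}ᵀ L_{(i)} is positive semidefinite. -/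
/-!
Since the corner `ūᵢ²/μ̄` is positive, the Schur complement of the LMI with respect to it,
`(W ⊕ R̂) - (μ̄/ūᵢ²) cᵀ c` with `c = [Z_(i)  J_(i)]`, is positive semidefinite. Congruence by the
symmetric matrix `T = W⁻¹ ⊕ I` maps `W ⊕ R̂` to `P̂(0)` and `c` to `c T = L_(i)`; scaling by `1/μ̄`
gives the claim.
-/

open Matrix

namespace Matrix

theorem nonsing_inv_mul_mul_nonsing_inv {n α : Type*} [Fintype n] [DecidableEq n] [CommRing α]
    (A : Matrix n n α) : A⁻¹ * A * A⁻¹ = A⁻¹ := by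
  by_cases h : IsUnit A.det
  · rw [nonsing_inv_mul A h, Matrix.one_mul]
  · rw [nonsing_inv_apply_not_isUnit A h, Matrix.zero_mul, Matrix.zero_mul]

theorem replicateCol_mul_inv_mul_conjTranspose {n α : Type*} [Field α] [StarRing α]
    (c : n → α) (d : α) :
    replicateCol (Fin 1) c * (of fun _ _ => d : Matrix (Fin 1) (Fin 1) α)⁻¹ *
      (replicateCol (Fin 1) c)ᴴ = d⁻¹ • vecMulVec c (star c) := by
  ext a b
  simp [conjTranspose_replicateCol, vecMulVec_apply, Matrix.mul_apply]
  ring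

open scoped ComplexOrder

variable {𝕜 : Type*} [RCLike 𝕜] {m n : Type*} [Fintype m] [Fintype n] [DecidableEq m]
  [DecidableEq n]

theorem posDef_of_const_fin_one {d : 𝕜} (hd : 0 < d) :
    (of fun _ _ => d : Matrix (Fin 1) (Fin 1) 𝕜).PosDef := by
  have : (of fun _ _ => d : Matrix (Fin 1) (Fin 1) 𝕜) = d • 1 := by
    ext a b; fin_cases a; fin_cases b; simp
  rw [this]
  exact PosDef.one.smul hd

theorem fromBlocks_inv_sub_smul_vecMulVec_posSemidef {W : Matrix m m 𝕜} {B : Matrix n n 𝕜}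
    {c : m ⊕ n → 𝕜} {d : 𝕜} (hd : 0 < d)
    (h : (fromBlocks (fromBlocks W 0 0 B) (replicateCol (Fin 1) c)
      (replicateRow (Fin 1) (star c)) (of fun _ _ => d)).PosSemidef) :
    (fromBlocks W⁻¹ 0 0 B - d⁻¹ • vecMulVec (star (star c ᵥ* fromBlocks W⁻¹ 0 0 1))
      (star c ᵥ* fromBlocks W⁻¹ 0 0 1)).PosSemidef := by
  have hW : Wᴴ = W := (isHermitian_fromBlocks_iff.mp (isHermitian_fromBlocks_iff.mp h.1).1).1
  have hD := posDef_of_const_fin_one hd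
  let := hD.isUnit.invertible
  have hS := (hD.fromBlocks₂₂ _ _).mp (by rwa [conjTranspose_replicateCol])
  set T : Matrix (m ⊕ n) (m ⊕ n) 𝕜 := fromBlocks W⁻¹ 0 0 1
  have hT : Tᴴ = T := by simp [T, fromBlocks_conjTranspose, conjTranspose_nonsing_inv, hW]
  have hTA : T * fromBlocks W 0 0 B * Tᴴ = fromBlocks W⁻¹ 0 0 B := by
    simp [hT, T, fromBlocks_multiply, nonsing_inv_mul_mul_nonsing_inv]
  have hTc : T * (replicateCol (Fin 1) c * (of fun _ _ => d : Matrix (Fin 1) (Fin 1) 𝕜)⁻¹ *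
      (replicateCol (Fin 1) c)ᴴ) * Tᴴ = d⁻¹ • vecMulVec (star (star c ᵥ* T)) (star c ᵥ* T) := by
    have hv : star c ᵥ* T = star (T *ᵥ c) := by rw [star_mulVec, hT]
    rw [hv, star_star, ← replicateCol_mul_inv_mul_conjTranspose, replicateCol_mulVec,
      conjTranspose_mul, hT]
    simp only [Matrix.mul_assoc]
  rw [← hTA, ← hTc, ← Matrix.sub_mul, ← Matrix.mul_sub]
  exact hS.mul_mul_conjTranspose_same T

end Matrix

theorem statement3_general (q m : ℕ) (nd : Fin q → ℕ)
    (ubar : Fin m → ℝ) (hubar : ∀ i, 0 < ubar i)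
    (μ : ℝ) (hμ : 0 < μ)
    (R : (i : Fin q) → Matrix (Fin (nd i)) (Fin (nd i)) ℝ)
    (W : Matrix ((i : Fin q) × Fin (nd i)) ((i : Fin q) × Fin (nd i)) ℝ)
    (Z J : Matrix (Fin m) ((i : Fin q) × Fin (nd i)) ℝ)
    (i : Fin m)
    (hLMI :
      (Matrix.fromBlocks
        (Matrix.fromBlocks W 0 0 (Matrix.blockDiagonal' R))
        (Matrix.replicateCol (Fin 1) (Sum.elim (Z i) (J i)))
        (Matrix.replicateRow (Fin 1) (Sum.elim (Z i) (J i)))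
        (Matrix.of fun _ _ => ubar i ^ 2 / μ)).PosSemidef) :
    ((1 / μ) • Matrix.fromBlocks W⁻¹ 0 0 (Matrix.blockDiagonal' R) -
      (ubar i ^ 2)⁻¹ •
        Matrix.vecMulVec (Matrix.fromCols (Z * W⁻¹) J i)
          (Matrix.fromCols (Z * W⁻¹) J i)).PosSemidef := by
  have hd : 0 < ubar i ^ 2 / μ := by have := hubar i; positivity
  have hS := fromBlocks_inv_sub_smul_vecMulVec_posSemidef hd (by rwa [star_trivial])
  have hL : Sum.elim (Z i) (J i) ᵥ* fromBlocks W⁻¹ 0 0 1 = fromCols (Z * W⁻¹) J i := by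
    ext (j | j) <;> simp [vecMul_fromBlocks, mul_apply_eq_vecMul]
  simp only [star_trivial, hL] at hS
  have hscale : 1 / μ * (ubar i ^ 2 / μ)⁻¹ = (ubar i ^ 2)⁻¹ := by field_simp
  simpa only [smul_sub, smul_smul, hscale] using hS.smul (one_div_pos.mpr hμ).le

/-- Schur-complement step. With `R̂ = ⊕ᵢ Rᵢ`, `P̂(0) = W⁻¹ ⊕ R̂`,
`L = [Z W⁻¹  J]`, if for an index `i` the block matrix
`[[W, 0, Z_(i)ᵀ], [0, R̂, J_(i)ᵀ], [Z_(i), J_(i), ūᵢ²/μ̄]]` is positive semidefinite,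
then `(1/μ̄) P̂(0) − (1/ūᵢ²) L_(i)ᵀ L_(i)` is positive semidefinite. -/
theorem statement3 (q m : ℕ) (nd : Fin q → ℕ) (hnd : ∀ i, 0 < nd i)
    (ubar : Fin m → ℝ) (hubar : ∀ i, 0 < ubar i)
    (μ : ℝ) (hμ : 0 < μ)
    (R : (i : Fin q) → Matrix (Fin (nd i)) (Fin (nd i)) ℝ) (hR : ∀ i, (R i).PosDef)
    (W : Matrix ((i : Fin q) × Fin (nd i)) ((i : Fin q) × Fin (nd i)) ℝ) (hW : W.PosDef)
    (Z J : Matrix (Fin m) ((i : Fin q) × Fin (nd i)) ℝ)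
    (i : Fin m)
    (hLMI :
      (Matrix.fromBlocks
        (Matrix.fromBlocks W 0 0 (Matrix.blockDiagonal' R))
        (Matrix.replicateCol (Fin 1) (Sum.elim (Z i) (J i)))
        (Matrix.replicateRow (Fin 1) (Sum.elim (Z i) (J i)))
        (Matrix.of fun _ _ => ubar i ^ 2 / μ)).PosSemidef) :
    ((1 / μ) • Matrix.fromBlocks W⁻¹ 0 0 (Matrix.blockDiagonal' R) -
      (ubar i ^ 2)⁻¹ •
        Matrix.vecMulVec (Matrix.fromCols (Z * W⁻¹) J i)
          (Matrix.fromCols (Z * W⁻¹) J i)).PosSemidef :=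
  statement3_general q m nd ubar hubar μ hμ R W Z J i hLMI
end

section
/- Let A ∈ ℝ^{n×n}, B ∈ ℝ^{n×m}, K ∈ ℝ^{m×n}, W ∈ 𝕊ⁿ₊, R_i ∈ 𝕊^{n_i}₊ for i = 1,…,q, S ∈ ℝ^{m×m} diagonal positive definite, σ₁,…,σ_q > 0, and Z, J ∈ ℝ^{m×n}. Set R(τ) := ⊕_{i=1}^q e^{σ_i τ_i} R_i, Σ := ⊕_{i=1}^q σ_i I_{n_i}, L := [Z W^{-1} J], and for τ ∈ T let M(τ) be the symmetric block matrix [[He((A+BK)W), −BK, BS − WKᵀ − Zᵀ], [⋆, He(R(τ)A) − Σ R(τ), Kᵀ − Jᵀ], [⋆, ⋆, −2S]]. Suppose M(τ) ≺ 0 for all τ ∈ T. Then there exists c₃ > 0 such that for all τ ∈ T and all x_p, η̃ ∈ ℝⁿ with |L_{(i)}(x_p, η̃)| ≤ ū_i for every i ∈ {1,…,m}, one has 2 x_pᵀ W^{-1} ((A+BK)x_p − BK η̃ + B·dz_ū(K x_p − K η̃)) + η̃ᵀ (He(R(τ)A) − Σ R(τ)) η̃ ≤ −c₃ (|x_p|²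 + |η̃|²). -/
/-!
Put `x := W⁻¹ x_p`, `v := K x_p − K η̃`, `φ := dz_ū(v)` and `ψ := S⁻¹ φ`. Expanding the quadratic
form of `M(τ)` at `ξ := (x, η̃, ψ)` shows that the left-hand side equals
`ξᵀ M(τ) ξ + 2 ψᵀ (φ + v + L (x_p, η̃))`. As `S` is diagonal and positive, the second term is a sum
of the terms `φᵢ (φᵢ + vᵢ + L_(i)(x_p, η̃)) / S_ii`, and each of them is nonpositive by the sector
condition of the deadzone, since `|L_(i)(x_p, η̃)| ≤ ūᵢ`. As `τ ↦ M(τ)` is continuous and `T` is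
compact, `−M(τ) ⪰ c₀ I` uniformly on `T`, and `|x_p|² ≤ ‖W‖_F² |x|²` turns
`−c₀ (|x|² + |η̃|²)` into the claimed bound.
-/

open Matrix

/-- `R(τ) = ⊕ᵢ e^{σᵢ τᵢ} Rᵢ` as a block-diagonal matrix. -/
noncomputable def Rmat {q : ℕ} (nd : Fin q → ℕ) (σ : Fin q → ℝ)
    (R : (i : Fin q) → Matrix (Fin (nd i)) (Fin (nd i)) ℝ) (τ : Fin q → ℝ) :
    Matrix ((i : Fin q) × Fin (nd i)) ((i : Fin q) × Fin (nd i)) ℝ :=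
  Matrix.blockDiagonal' fun i => Real.exp (σ i * τ i) • R i

/-- `Σ = ⊕ᵢ σᵢ I_{nᵢ}` as a block-diagonal matrix. -/
noncomputable def Sig {q : ℕ} (nd : Fin q → ℕ) (σ : Fin q → ℝ) :
    Matrix ((i : Fin q) × Fin (nd i)) ((i : Fin q) × Fin (nd i)) ℝ :=
  Matrix.blockDiagonal' fun i => σ i • (1 : Matrix (Fin (nd i)) (Fin (nd i)) ℝ)

theorem dzv_sector_condition {m : ℕ} (ubar v : Fin m → ℝ) (i : Fin m) {w : ℝ}
    (hw : |w| ≤ ubar i) : dzv ubar v i * (dzv ubar v i + v i + w) ≤ 0 := by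
  obtain ⟨hw₁, hw₂⟩ := abs_le.mp hw
  simp only [dzv, satv]
  rcases lt_trichotomy (v i) 0 with hv | hv | hv
  · rw [Real.sign_of_neg hv, abs_of_neg hv]
    rcases le_or_gt (-v i) (ubar i) with h | h
    · rw [min_eq_left h]; nlinarith
    · rw [min_eq_right h.le]; nlinarith
  · simp [hv]
  · rw [Real.sign_of_pos hv, abs_of_pos hv]
    rcases le_or_gt (v i) (ubar i) with h | h
    · rw [min_eq_left h]; nlinarith
    · rw [min_eq_right h.le]; nlinarith

@[fun_prop]
theorem continuous_Rmat {q : ℕ} (nd : Fin q → ℕ) (σ : Fin q → ℝ)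
    (R : (i : Fin q) → Matrix (Fin (nd i)) (Fin (nd i)) ℝ) : Continuous (Rmat nd σ R) := by
  unfold Rmat
  fun_prop

namespace Matrix

variable {ι n m : Type*} [Fintype ι] [Fintype n] [Fintype m]

theorem dotProduct_self_nonneg (ξ : ι → ℝ) : 0 ≤ ξ ⬝ᵥ ξ :=
  Finset.sum_nonneg fun i _ => mul_self_nonneg (ξ i)

theorem isCompact_dotProduct_self_eq_one : IsCompact {ξ : ι → ℝ | ξ ⬝ᵥ ξ = 1} := by
  have h : {ξ : ι → ℝ | ξ ⬝ᵥ ξ = 1} = EuclideanSpace.equiv ι ℝ '' Metric.sphere 0 1 := by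
    ext ξ
    rw [ContinuousLinearEquiv.image_eq_preimage_symm]
    simp [EuclideanSpace.norm_eq, dotProduct, ← sq, Real.sqrt_eq_one]
  rw [h]
  exact (isCompact_sphere 0 1).image (EuclideanSpace.equiv ι ℝ).continuous

theorem mulVec_dotProduct_mulVec_self_le (W : Matrix m n ℝ) (x : n → ℝ) :
    (W *ᵥ x) ⬝ᵥ (W *ᵥ x) ≤ (∑ i, ∑ j, W i j ^ 2) * (x ⬝ᵥ x) := by
  simp only [dotProduct, mulVec, ← sq]
  rw [Finset.sum_mul]
  exact Finset.sum_le_sum fun i _ => Finset.sum_mul_sq_le_sq_mul_sq _ _ _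

theorem IsDiag.exists_mulVec_eq_and_dotProduct_nonpos {S : Matrix m m ℝ} (hdiag : S.IsDiag)
    (hS : S.PosDef) {φ y : m → ℝ} (h : ∀ i, φ i * y i ≤ 0) :
    ∃ ψ, S *ᵥ ψ = φ ∧ ψ ⬝ᵥ y ≤ 0 := by
  classical
  obtain ⟨d, rfl⟩ : ∃ d, diagonal d = S := ⟨_, hdiag.diagonal_diag⟩
  have hd (i : m) : 0 < d i := by simpa using hS.diag_pos (i := i)
  refine ⟨fun i => φ i / d i, ?_, ?_⟩
  · ext i
    rw [mulVec_diagonal, mul_div_cancel₀ _ (hd i).ne']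
  · refine Finset.sum_nonpos fun i _ => ?_
    rw [div_mul_eq_mul_div]
    exact div_nonpos_of_nonpos_of_nonneg (h i) (hd i).le

end Matrix

theorem IsCompact.exists_pos_mul_dotProduct_self_le {X ι : Type*} [TopologicalSpace X]
    [Fintype ι] {s : Set X} (hs : IsCompact s) {g : X → Matrix ι ι ℝ} (hg : Continuous g)
    (hpos : ∀ x ∈ s, (g x).PosDef) :
    ∃ c > 0, ∀ x ∈ s, ∀ ξ : ι → ℝ, c * (ξ ⬝ᵥ ξ) ≤ ξ ⬝ᵥ (g x *ᵥ ξ) := by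
  have hcont : Continuous fun p : X × (ι → ℝ) => p.2 ⬝ᵥ (g p.1 *ᵥ p.2) :=
    continuous_snd.dotProduct ((hg.comp continuous_fst).matrix_mulVec continuous_snd)
  obtain ⟨c, hc, hmin⟩ := (hs.prod isCompact_dotProduct_self_eq_one).exists_forall_le'
    hcont.continuousOn (a := 0) fun p ⟨hp₁, hp₂⟩ => by
      have hne : p.2 ≠ 0 := by rintro h; simp [h] at hp₂
      simpa using (hpos p.1 hp₁).dotProduct_mulVec_pos hne
  refine ⟨c, hc, fun x hx ξ => ?_⟩
  rcases eq_or_ne ξ 0 with rfl | hξ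
  · simp
  have hξξ : 0 < ξ ⬝ᵥ ξ :=
    (dotProduct_self_nonneg ξ).lt_of_ne' (dotProduct_self_eq_zero.not.mpr hξ)
  set r := √(ξ ⬝ᵥ ξ)
  have hr : 0 < r := Real.sqrt_pos.mpr hξξ
  have hrr : r * r = ξ ⬝ᵥ ξ := Real.mul_self_sqrt hξξ.le
  have hunit : (r⁻¹ • ξ) ⬝ᵥ (r⁻¹ • ξ) = 1 := by
    simp only [smul_dotProduct, dotProduct_smul, smul_eq_mul, ← hrr]
    field_simp
  have hξ_min := hmin (x, r⁻¹ • ξ) ⟨hx, hunit⟩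
  simp only [mulVec_smul, smul_dotProduct, dotProduct_smul, smul_eq_mul] at hξ_min
  calc c * (ξ ⬝ᵥ ξ) ≤ r⁻¹ * (r⁻¹ * (ξ ⬝ᵥ (g x *ᵥ ξ))) * (r * r) := by
        rw [hrr]; exact mul_le_mul_of_nonneg_right hξ_min hξξ.le
    _ = ξ ⬝ᵥ (g x *ᵥ ξ) := by field_simp

section LMI

variable {n m : Type*} [Fintype n] [Fintype m]

/-- The matrix `M(τ)` of the paper, with the block `D` in place of `He(R(τ)A) − Σ R(τ)`. -/
def lmiMatrix (A W D : Matrix n n ℝ) (B : Matrix n m ℝ) (K Z J : Matrix m n ℝ)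
    (S : Matrix m m ℝ) : Matrix ((n ⊕ n) ⊕ m) ((n ⊕ n) ⊕ m) ℝ :=
  fromBlocks
    (fromBlocks ((A + B * K) * W + ((A + B * K) * W)ᵀ) (-(B * K)) (-(B * K))ᵀ D)
    (fromRows (B * S - W * Kᵀ - Zᵀ) (Kᵀ - Jᵀ))
    (fromRows (B * S - W * Kᵀ - Zᵀ) (Kᵀ - Jᵀ))ᵀ
    (-(2 : ℝ) • S)

theorem continuous_lmiMatrix {X : Type*} [TopologicalSpace X] (A W : Matrix n n ℝ)
    {D : X → Matrix n n ℝ} (hD : Continuous D) (B : Matrix n m ℝ) (K Z J : Matrix m n ℝ)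
    (S : Matrix m m ℝ) : Continuous fun x => lmiMatrix A W (D x) B K Z J S := by
  unfold lmiMatrix
  fun_prop

theorem dotProduct_lmiMatrix_mulVec (A D : Matrix n n ℝ) {W : Matrix n n ℝ} (hW : Wᵀ = W)
    (B : Matrix n m ℝ) (K Z J : Matrix m n ℝ) (S : Matrix m m ℝ) (x η : n → ℝ) (ψ : m → ℝ) :
    Sum.elim (Sum.elim x η) ψ ⬝ᵥ (lmiMatrix A W D B K Z J S *ᵥ Sum.elim (Sum.elim x η) ψ)
      + 2 * (ψ ⬝ᵥ (S *ᵥ ψ + (K *ᵥ (W *ᵥ x) - K *ᵥ η) + (Z *ᵥ x + J *ᵥ η)))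
    = 2 * (x ⬝ᵥ ((A + B * K) *ᵥ (W *ᵥ x) - (B * K) *ᵥ η + B *ᵥ (S *ᵥ ψ)))
      + η ⬝ᵥ (D *ᵥ η) := by
  -- as a transpose, this block is moved across the dot product by `dotProduct_transpose_mulVec`
  have hWK : W * Kᵀ = (K * W)ᵀ := by rw [transpose_mul, hW]
  simp only [lmiMatrix, hWK, fromBlocks_mulVec, Sum.elim_comp_inl, Sum.elim_comp_inr,
    fromRows_mulVec, transpose_fromRows, fromCols_mulVec_sumElim,
    sumElim_dotProduct_sumElim, dotProduct_transpose_mulVec, add_mulVec, sub_mulVec,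
    neg_mulVec, smul_mulVec, mulVec_mulVec, dotProduct_add, dotProduct_sub,
    dotProduct_neg, dotProduct_smul, smul_eq_mul]
  ring

end LMI

theorem exists_le_dotProduct_lmiMatrix_mulVec {n : Type*} [Fintype n] [DecidableEq n] {m : ℕ}
    (A D : Matrix n n ℝ) {W : Matrix n n ℝ} (hWsymm : Wᵀ = W) (hWdet : IsUnit W.det)
    (B : Matrix n (Fin m) ℝ) (K Z J : Matrix (Fin m) n ℝ) {S : Matrix (Fin m) (Fin m) ℝ}
    (hSdiag : S.IsDiag) (hSpos : S.PosDef) (ubar : Fin m → ℝ) (xp η : n → ℝ)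
    (hL : ∀ i, |fromCols (Z * W⁻¹) J i ⬝ᵥ Sum.elim xp η| ≤ ubar i) :
    ∃ ψ, 2 * (xp ⬝ᵥ (W⁻¹ *ᵥ ((A + B * K) *ᵥ xp - (B * K) *ᵥ η +
          B *ᵥ dzv ubar (K *ᵥ xp - K *ᵥ η)))) + η ⬝ᵥ (D *ᵥ η) ≤
      Sum.elim (Sum.elim (W⁻¹ *ᵥ xp) η) ψ ⬝ᵥ
        (lmiMatrix A W D B K Z J S *ᵥ Sum.elim (Sum.elim (W⁻¹ *ᵥ xp) η) ψ) := by
  set v := K *ᵥ xp - K *ᵥ η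
  set w := (Z * W⁻¹) *ᵥ xp + J *ᵥ η
  set x := W⁻¹ *ᵥ xp
  have hxp : W *ᵥ x = xp := by rw [mulVec_mulVec, mul_nonsing_inv _ hWdet, one_mulVec]
  have hdot (t) : xp ⬝ᵥ (W⁻¹ *ᵥ t) = x ⬝ᵥ t := by
    rw [← hWsymm, ← transpose_nonsing_inv, dotProduct_transpose_mulVec]
    exact dotProduct_comm _ _
  have hLw : fromCols (Z * W⁻¹) J *ᵥ Sum.elim xp η = w := fromCols_mulVec_sumElim _ _ _ _
  have hw (i : Fin m) : |w i| ≤ ubar i := by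
    rw [← hLw]
    exact hL i
  obtain ⟨ψ, hSψ, hψ⟩ := hSdiag.exists_mulVec_eq_and_dotProduct_nonpos hSpos
    (y := dzv ubar v + v + w) fun i => by
      simpa [add_assoc] using dzv_sector_condition ubar v i (hw i)
  have hquad := dotProduct_lmiMatrix_mulVec A D hWsymm B K Z J S x η ψ
  rw [hxp, hSψ, show Z *ᵥ x = (Z * W⁻¹) *ᵥ xp from mulVec_mulVec _ _ _] at hquad
  refine ⟨ψ, ?_⟩
  rw [hdot]
  linarith

theorem dotProduct_mulVec_le_of_coercive_neg {n m : Type*} [Fintype n] [Fintype m]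
    {M : Matrix ((n ⊕ n) ⊕ m) ((n ⊕ n) ⊕ m) ℝ} {c₀ : ℝ} (hc₀ : 0 < c₀)
    (hM : ∀ ξ, c₀ * (ξ ⬝ᵥ ξ) ≤ ξ ⬝ᵥ ((-M) *ᵥ ξ)) (W : Matrix n n ℝ) {x xp : n → ℝ} (η : n → ℝ)
    (ψ : m → ℝ) (hxp : W *ᵥ x = xp) :
    Sum.elim (Sum.elim x η) ψ ⬝ᵥ (M *ᵥ Sum.elim (Sum.elim x η) ψ) ≤
      -(c₀ / (∑ i, ∑ j, W i j ^ 2 + 1)) * (xp ⬝ᵥ xp + η ⬝ᵥ η) := by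
  set C := ∑ i, ∑ j, W i j ^ 2
  have hC : 0 ≤ C := by positivity
  have hξ := hM (Sum.elim (Sum.elim x η) ψ)
  simp only [neg_mulVec, dotProduct_neg, sumElim_dotProduct_sumElim] at hξ
  have hxp_bound : c₀ / (C + 1) * (xp ⬝ᵥ xp) ≤ c₀ * (x ⬝ᵥ x) := by
    rw [div_mul_eq_mul_div, div_le_iff₀ (by positivity), ← hxp]
    nlinarith [mulVec_dotProduct_mulVec_self_le W x, dotProduct_self_nonneg x]
  have hη_bound : c₀ / (C + 1) * (η ⬝ᵥ η) ≤ c₀ * (η ⬝ᵥ η) :=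
    mul_le_mul_of_nonneg_right (div_le_self hc₀.le (le_add_of_nonneg_left hC))
      (dotProduct_self_nonneg η)
  nlinarith [dotProduct_self_nonneg ψ]

theorem statement5_general (q m : ℕ) (nd : Fin q → ℕ)
    (T2 : Fin q → ℝ)
    (ubar : Fin m → ℝ)
    (A : Matrix ((i : Fin q) × Fin (nd i)) ((i : Fin q) × Fin (nd i)) ℝ)
    (B : Matrix ((i : Fin q) × Fin (nd i)) (Fin m) ℝ)
    (K : Matrix (Fin m) ((i : Fin q) × Fin (nd i)) ℝ)
    (W : Matrix ((i : Fin q) × Fin (nd i)) ((i : Fin q) × Fin (nd i)) ℝ) (hW : W.PosDef)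
    (R : (i : Fin q) → Matrix (Fin (nd i)) (Fin (nd i)) ℝ)
    (S : Matrix (Fin m) (Fin m) ℝ) (hSdiag : S.IsDiag) (hSpos : S.PosDef)
    (σ : Fin q → ℝ)
    (Z J : Matrix (Fin m) ((i : Fin q) × Fin (nd i)) ℝ)
    (hM : ∀ τ : Fin q → ℝ, (∀ i, τ i ∈ Set.Icc 0 (T2 i)) →
      (-(Matrix.fromBlocks
          (Matrix.fromBlocks
            ((A + B * K) * W + ((A + B * K) * W)ᵀ)
            (-(B * K))
            (-(B * K))ᵀ
            (Rmat nd σ R τ * A + (Rmat nd σ R τ * A)ᵀ - Sig nd σ * Rmat nd σ R τ))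
          (Matrix.fromRows (B * S - W * Kᵀ - Zᵀ) (Kᵀ - Jᵀ))
          (Matrix.fromRows (B * S - W * Kᵀ - Zᵀ) (Kᵀ - Jᵀ))ᵀ
          (-(2 : ℝ) • S))).PosDef) :
    ∃ c₃ > (0 : ℝ), ∀ τ : Fin q → ℝ, (∀ i, τ i ∈ Set.Icc 0 (T2 i)) →
      ∀ xp ηt : ((i : Fin q) × Fin (nd i)) → ℝ,
        (∀ i : Fin m, |Matrix.fromCols (Z * W⁻¹) J i ⬝ᵥ Sum.elim xp ηt| ≤ ubar i) →
        2 * (xp ⬝ᵥ (W⁻¹ *ᵥ ((A + B * K) *ᵥ xp - (B * K) *ᵥ ηt +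
              B *ᵥ dzv ubar (K *ᵥ xp - K *ᵥ ηt)))) +
          ηt ⬝ᵥ ((Rmat nd σ R τ * A + (Rmat nd σ R τ * A)ᵀ -
              Sig nd σ * Rmat nd σ R τ) *ᵥ ηt) ≤
          -c₃ * (xp ⬝ᵥ xp + ηt ⬝ᵥ ηt) := by
  have hWsymm : Wᵀ = W := (conjTranspose_eq_transpose_of_trivial W).symm.trans hW.isHermitian
  have hWdet : IsUnit W.det := isUnit_iff_ne_zero.mpr hW.det_pos.ne'
  have hDc : Continuous fun τ =>
      Rmat nd σ R τ * A + (Rmat nd σ R τ * A)ᵀ - Sig nd σ * Rmat nd σ R τ := by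
    fun_prop
  have hT : IsCompact (Set.univ.pi fun i => Set.Icc 0 (T2 i)) :=
    isCompact_univ_pi fun i => isCompact_Icc
  obtain ⟨c₀, hc₀, hcoer⟩ := hT.exists_pos_mul_dotProduct_self_le
    (continuous_lmiMatrix A W hDc B K Z J S).neg fun τ hτ => hM τ (Set.mem_univ_pi.mp hτ)
  refine ⟨c₀ / (∑ i, ∑ j, W i j ^ 2 + 1), by positivity, fun τ hτ xp ηt hL => ?_⟩
  obtain ⟨ψ, hle⟩ := exists_le_dotProduct_lmiMatrix_mulVec A _ hWsymm hWdet B K Z J hSdiag hSpos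
    ubar xp ηt hL
  refine hle.trans (dotProduct_mulVec_le_of_coercive_neg hc₀ (hcoer τ (Set.mem_univ_pi.mpr hτ))
    W ηt ψ ?_)
  rw [mulVec_mulVec, mul_nonsing_inv _ hWdet, one_mulVec]

/-- if the clock-dependent matrix
`M(τ) = [[He((A+BK)W), −BK, BS − WKᵀ − Zᵀ], [⋆, He(R(τ)A) − Σ R(τ), Kᵀ − Jᵀ], [⋆, ⋆, −2S]]`
is negative definite for all `τ ∈ T = ∏ᵢ [0, T₂⁽ⁱ⁾]`, then there exists `c₃ > 0` such that
for all `τ ∈ T` and all `x_p, η̃` with `|L_(i)(x_p, η̃)| ≤ ūᵢ` (where `L = [Z W⁻¹  J]`),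
`2 x_pᵀ W⁻¹ ((A+BK)x_p − BK η̃ + B dz_ū(K x_p − K η̃)) + η̃ᵀ (He(R(τ)A) − Σ R(τ)) η̃
  ≤ −c₃ (|x_p|² + |η̃|²)`. -/
theorem statement5 (q m : ℕ) (hq : 0 < q) (nd : Fin q → ℕ) (hnd : ∀ i, 0 < nd i)
    (T2 : Fin q → ℝ) (hT2 : ∀ i, 0 < T2 i)
    (ubar : Fin m → ℝ) (hubar : ∀ i, 0 < ubar i)
    (A : Matrix ((i : Fin q) × Fin (nd i)) ((i : Fin q) × Fin (nd i)) ℝ)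
    (B : Matrix ((i : Fin q) × Fin (nd i)) (Fin m) ℝ)
    (K : Matrix (Fin m) ((i : Fin q) × Fin (nd i)) ℝ)
    (W : Matrix ((i : Fin q) × Fin (nd i)) ((i : Fin q) × Fin (nd i)) ℝ) (hW : W.PosDef)
    (R : (i : Fin q) → Matrix (Fin (nd i)) (Fin (nd i)) ℝ) (hR : ∀ i, (R i).PosDef)
    (S : Matrix (Fin m) (Fin m) ℝ) (hSdiag : S.IsDiag) (hSpos : S.PosDef)
    (σ : Fin q → ℝ) (hσ : ∀ i, 0 < σ i)
    (Z J : Matrix (Fin m) ((i : Fin q) × Fin (nd i)) ℝ)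
    (hM : ∀ τ : Fin q → ℝ, (∀ i, τ i ∈ Set.Icc 0 (T2 i)) →
      (-(Matrix.fromBlocks
          (Matrix.fromBlocks
            ((A + B * K) * W + ((A + B * K) * W)ᵀ)
            (-(B * K))
            (-(B * K))ᵀ
            (Rmat nd σ R τ * A + (Rmat nd σ R τ * A)ᵀ - Sig nd σ * Rmat nd σ R τ))
          (Matrix.fromRows (B * S - W * Kᵀ - Zᵀ) (Kᵀ - Jᵀ))
          (Matrix.fromRows (B * S - W * Kᵀ - Zᵀ) (Kᵀ - Jᵀ))ᵀ
          (-(2 : ℝ) • S))).PosDef) :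
    ∃ c₃ > (0 : ℝ), ∀ τ : Fin q → ℝ, (∀ i, τ i ∈ Set.Icc 0 (T2 i)) →
      ∀ xp ηt : ((i : Fin q) × Fin (nd i)) → ℝ,
        (∀ i : Fin m, |Matrix.fromCols (Z * W⁻¹) J i ⬝ᵥ Sum.elim xp ηt| ≤ ubar i) →
        2 * (xp ⬝ᵥ (W⁻¹ *ᵥ ((A + B * K) *ᵥ xp - (B * K) *ᵥ ηt +
              B *ᵥ dzv ubar (K *ᵥ xp - K *ᵥ ηt)))) +
          ηt ⬝ᵥ ((Rmat nd σ R τ * A + (Rmat nd σ R τ * A)ᵀ -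
              Sig nd σ * Rmat nd σ R τ) *ᵥ ηt) ≤
          -c₃ * (xp ⬝ᵥ xp + ηt ⬝ᵥ ηt) :=
  statement5_general q m nd T2 ubar A B K W hW R S hSdiag hSpos σ Z J hM
end

section
/- Let W ∈ 𝕊ⁿ₊, K ∈ ℝ^{m×n}, A ∈ ℝ^{n×n}, B ∈ ℝ^{n×m}, R_i ∈ 𝕊^{n_i}₊, S ∈ ℝ^{m×m} diagonal positive definite, σ₁,…,σ_q > 0, Z, J ∈ ℝ^{m×n}. Set R(τ) := ⊕_{i=1}^q e^{σ_i τ_i} R_i, Σ := ⊕_{i=1}^q σ_i I_{n_i}, R̂ := ⊕_{i=1}^q R_i, and 𝒵 := { ⊕_{i=1}^q ψ_i I_{n_i} : ψ_i ∈ {1, e^{σ_i T₂^{(i)}}} }. Then the symmetric block matrix M(τ) := [[He((A+BK)W), −BK, BS − WKᵀ − Zᵀ], [⋆, He(R(τ)A) − Σ R(τ), Kᵀ − Jᵀ], [⋆, ⋆, −2S]] is negative definite for all τ ∈ T if and only if 𝔑(Ψ) := [[He((A+BK)W), −BK, BS − WKᵀ − Zᵀ], [⋆, He(R̂ΨA)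 − Σ R̂Ψ, Kᵀ − Jᵀ], [⋆, ⋆, −2S]] is negative definite for all Ψ ∈ 𝒵. -/
/-!
With `Ψ(τ) = ⊕ᵢ e^{σᵢτᵢ} I_{nᵢ}` we have `R(τ) = R̂ Ψ(τ)`, so `M(τ) = 𝔑(Ψ(τ))`, and `Ψ ↦ 𝔑(Ψ)` is
affine. As `τ` ranges over `T`, the diagonal weights of `Ψ(τ)` sweep the box
`∏ᵢ [1, e^{σᵢT₂⁽ⁱ⁾}]`, which is the convex hull of its vertices `𝒵`. Negative definiteness is a
convex condition, so it holds on the whole box as soon as it holds on `𝒵`; conversely every vertex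
is `Ψ(τ)` for the clock value with `τᵢ ∈ {0, T₂⁽ⁱ⁾}`.
-/

open Matrix

open scoped ComplexOrder in
theorem Matrix.convex_setOf_posDef {𝕜 n : Type*} [RCLike 𝕜] [Fintype n] :
    Convex ℝ {A : Matrix n n 𝕜 | A.PosDef} := by
  intro A hA B hB a b ha hb hab
  rcases ha.eq_or_lt with rfl | ha
  · simpa [show b = 1 by linarith] using hB
  · exact (PosDef.smul hA ha).add_posSemidef (hB.posSemidef.smul hb)

theorem convexHull_univ_pi_pair {𝕜 ι : Type*} [Finite ι] [Field 𝕜] [LinearOrder 𝕜]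
    [IsStrictOrderedRing 𝕜] {a b : ι → 𝕜} (hab : a ≤ b) :
    convexHull 𝕜 (Set.univ.pi fun i => {a i, b i}) = Set.Icc a b := by
  rw [convexHull_pi, ← Set.pi_univ_Icc]
  exact Set.pi_congr rfl fun i _ => (convexHull_pair _ _).trans (segment_eq_Icc (hab i))

section BlockScalar

variable {𝕜 ι : Type*} [CommRing 𝕜] [DecidableEq ι] {d : ι → Type*} [∀ i, DecidableEq (d i)]

variable (d) in
def blockScalar (ψ : ι → 𝕜) :
    Matrix ((i : ι) × d i) ((i : ι) × d i) 𝕜 :=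
  blockDiagonal' fun i => ψ i • (1 : Matrix (d i) (d i) 𝕜)

theorem blockScalar_add_smul (a b : 𝕜) (ψ φ : ι → 𝕜) :
    blockScalar d (a • ψ + b • φ) = a • blockScalar d ψ + b • blockScalar d φ := by
  simp only [blockScalar, ← blockDiagonal'_smul, ← blockDiagonal'_add, Pi.add_apply,
    Pi.smul_apply, smul_eq_mul, add_smul, mul_smul]
  rfl

end BlockScalar

section LMI

variable {𝕜 n m : Type*} [CommRing 𝕜] [Fintype n] [Fintype m]

/-- `-𝔑(Ψ)`, with `Sg = Σ`, `Rh = R̂` and an arbitrary middle factor `Ψ`. -/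
def negLMI (A : Matrix n n 𝕜) (B : Matrix n m 𝕜) (K : Matrix m n 𝕜) (W : Matrix n n 𝕜)
    (S : Matrix m m 𝕜) (Z J : Matrix m n 𝕜) (Sg Rh Ψ : Matrix n n 𝕜) :
    Matrix ((n ⊕ n) ⊕ m) ((n ⊕ n) ⊕ m) 𝕜 :=
  -(fromBlocks
      (fromBlocks
        ((A + B * K) * W + ((A + B * K) * W)ᵀ)
        (-(B * K))
        (-(B * K))ᵀ
        (Rh * Ψ * A + (Rh * Ψ * A)ᵀ - Sg * (Rh * Ψ)))
      (fromRows (B * S - W * Kᵀ - Zᵀ) (Kᵀ - Jᵀ))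
      (fromRows (B * S - W * Kᵀ - Zᵀ) (Kᵀ - Jᵀ))ᵀ
      (-(2 : 𝕜) • S))

theorem negLMI_add_smul (A : Matrix n n 𝕜) (B : Matrix n m 𝕜) (K : Matrix m n 𝕜)
    (W : Matrix n n 𝕜) (S : Matrix m m 𝕜) (Z J : Matrix m n 𝕜) (Sg Rh Ψ₁ Ψ₂ : Matrix n n 𝕜)
    {a b : 𝕜} (hab : a + b = 1) :
    negLMI A B K W S Z J Sg Rh (a • Ψ₁ + b • Ψ₂) =
      a • negLMI A B K W S Z J Sg Rh Ψ₁ + b • negLMI A B K W S Z J Sg Rh Ψ₂ := by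
  simp only [negLMI, smul_neg, ← neg_add, fromBlocks_smul, fromBlocks_add, neg_inj,
    fromBlocks_inj]
  -- all blocks but the `Ψ`-block are constant
  refine ⟨⟨?_, ?_, ?_, ?_⟩, ?_, ?_, ?_⟩ <;> try exact (Convex.combo_self hab _).symm
  simp only [Matrix.mul_add, Matrix.add_mul, Matrix.mul_smul, Matrix.smul_mul, transpose_add,
    transpose_smul, smul_sub, smul_add]
  abel

end LMI

theorem convex_setOf_posDef_negLMI_blockScalar {m ι : Type*} [Fintype m]
    [Fintype ι] [DecidableEq ι] {d : ι → Type*} [∀ i, Fintype (d i)] [∀ i, DecidableEq (d i)]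
    (A : Matrix (Σ i, d i) (Σ i, d i) ℝ) (B : Matrix (Σ i, d i) m ℝ)
    (K : Matrix m (Σ i, d i) ℝ) (W : Matrix (Σ i, d i) (Σ i, d i) ℝ) (S : Matrix m m ℝ)
    (Z J : Matrix m (Σ i, d i) ℝ) (Sg Rh : Matrix (Σ i, d i) (Σ i, d i) ℝ) :
    Convex ℝ {ψ : ι → ℝ | (negLMI A B K W S Z J Sg Rh (blockScalar d ψ)).PosDef} := by
  intro ψ hψ φ hφ a b ha hb hab
  simp only [Set.mem_ofPred_eq, blockScalar_add_smul, negLMI_add_smul _ _ _ _ _ _ _ _ _ _ _ hab]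
  exact Matrix.convex_setOf_posDef hψ hφ ha hb hab

theorem Rmat_eq_mul_blockScalar {q : ℕ} (nd : Fin q → ℕ) (σ : Fin q → ℝ)
    (R : (i : Fin q) → Matrix (Fin (nd i)) (Fin (nd i)) ℝ) (τ : Fin q → ℝ) :
    Rmat nd σ R τ = blockDiagonal' R * blockScalar _ fun i => Real.exp (σ i * τ i) := by
  simp only [Rmat, blockScalar, ← blockDiagonal'_mul, Matrix.mul_smul, Matrix.mul_one]

theorem exists_clock_of_vertex {ι : Type*} {σ T ψ : ι → ℝ} (hT : 0 ≤ T)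
    (hψ : ∀ i, ψ i = 1 ∨ ψ i = Real.exp (σ i * T i)) :
    ∃ τ : ι → ℝ, (∀ i, τ i ∈ Set.Icc 0 (T i)) ∧ (fun i => Real.exp (σ i * τ i)) = ψ := by
  have hcoord : ∀ i, ∃ t ∈ Set.Icc 0 (T i), Real.exp (σ i * t) = ψ i := fun i =>
    (hψ i).elim (fun h => ⟨0, ⟨le_rfl, hT i⟩, by simp [h]⟩)
      (fun h => ⟨T i, ⟨hT i, le_rfl⟩, h.symm⟩)
  choose τ hτ hexp using hcoord
  exact ⟨τ, hτ, funext hexp⟩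

theorem exp_mul_mem_Icc {ι : Type*} {σ T τ : ι → ℝ} (hσ : 0 ≤ σ)
    (hτ : ∀ i, τ i ∈ Set.Icc 0 (T i)) :
    (fun i => Real.exp (σ i * τ i)) ∈ Set.Icc 1 fun i => Real.exp (σ i * T i) :=
  ⟨fun i => Real.one_le_exp (mul_nonneg (hσ i) (hτ i).1),
    fun i => Real.exp_le_exp.2 (mul_le_mul_of_nonneg_left (hτ i).2 (hσ i))⟩

theorem statement8_general (q m : ℕ) (nd : Fin q → ℕ)
    (T2 : Fin q → ℝ) (hT2 : ∀ i, 0 < T2 i)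
    (A : Matrix ((i : Fin q) × Fin (nd i)) ((i : Fin q) × Fin (nd i)) ℝ)
    (B : Matrix ((i : Fin q) × Fin (nd i)) (Fin m) ℝ)
    (K : Matrix (Fin m) ((i : Fin q) × Fin (nd i)) ℝ)
    (W : Matrix ((i : Fin q) × Fin (nd i)) ((i : Fin q) × Fin (nd i)) ℝ)
    (R : (i : Fin q) → Matrix (Fin (nd i)) (Fin (nd i)) ℝ)
    (S : Matrix (Fin m) (Fin m) ℝ)
    (σ : Fin q → ℝ) (hσ : ∀ i, 0 < σ i)
    (Z J : Matrix (Fin m) ((i : Fin q) × Fin (nd i)) ℝ) :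
    (∀ τ : Fin q → ℝ, (∀ i, τ i ∈ Set.Icc 0 (T2 i)) →
      (-(Matrix.fromBlocks
          (Matrix.fromBlocks
            ((A + B * K) * W + ((A + B * K) * W)ᵀ)
            (-(B * K))
            (-(B * K))ᵀ
            (Rmat nd σ R τ * A + (Rmat nd σ R τ * A)ᵀ - Sig nd σ * Rmat nd σ R τ))
          (Matrix.fromRows (B * S - W * Kᵀ - Zᵀ) (Kᵀ - Jᵀ))
          (Matrix.fromRows (B * S - W * Kᵀ - Zᵀ) (Kᵀ - Jᵀ))ᵀ
          (-(2 : ℝ) • S))).PosDef) ↔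
    (∀ ψ : Fin q → ℝ, (∀ i, ψ i = 1 ∨ ψ i = Real.exp (σ i * T2 i)) →
      (-(Matrix.fromBlocks
          (Matrix.fromBlocks
            ((A + B * K) * W + ((A + B * K) * W)ᵀ)
            (-(B * K))
            (-(B * K))ᵀ
            ((Matrix.blockDiagonal' R *
                (Matrix.blockDiagonal' fun i =>
                  ψ i • (1 : Matrix (Fin (nd i)) (Fin (nd i)) ℝ)) * A) +
              (Matrix.blockDiagonal' R *
                (Matrix.blockDiagonal' fun i =>
                  ψ i • (1 : Matrix (Fin (nd i)) (Fin (nd i)) ℝ)) * A)ᵀ -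
              Sig nd σ *
                (Matrix.blockDiagonal' R *
                  (Matrix.blockDiagonal' fun i =>
                    ψ i • (1 : Matrix (Fin (nd i)) (Fin (nd i)) ℝ)))))
          (Matrix.fromRows (B * S - W * Kᵀ - Zᵀ) (Kᵀ - Jᵀ))
          (Matrix.fromRows (B * S - W * Kᵀ - Zᵀ) (Kᵀ - Jᵀ))ᵀ
          (-(2 : ℝ) • S))).PosDef) := by
  set P : (Fin q → ℝ) → Prop := fun ψ =>
    (negLMI A B K W S Z J (Sig nd σ) (blockDiagonal' R) (blockScalar _ ψ)).PosDef
  simp only [Rmat_eq_mul_blockScalar]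
  change (∀ τ : Fin q → ℝ, (∀ i, τ i ∈ Set.Icc 0 (T2 i)) → P fun i => Real.exp (σ i * τ i)) ↔
    ∀ ψ : Fin q → ℝ, (∀ i, ψ i = 1 ∨ ψ i = Real.exp (σ i * T2 i)) → P ψ
  constructor
  · intro h ψ hψ
    obtain ⟨τ, hτ, rfl⟩ := exists_clock_of_vertex (fun i => (hT2 i).le) hψ
    exact h τ hτ
  · intro h τ hτ
    have hhull : convexHull ℝ (Set.univ.pi fun i => {1, Real.exp (σ i * T2 i)}) ⊆ {ψ | P ψ} :=
      convexHull_min (fun ψ hψ => h ψ fun i => hψ i trivial)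
        (convex_setOf_posDef_negLMI_blockScalar A B K W S Z J _ _)
    apply hhull
    rw [convexHull_univ_pi_pair fun i => Real.one_le_exp (mul_nonneg (hσ i).le (hT2 i).le)]
    exact exp_mul_mem_Icc (fun i => (hσ i).le) hτ

/-- Proposition: vertex reduction. The clock-dependent matrix
`M(τ) = [[He((A+BK)W), −BK, BS − WKᵀ − Zᵀ], [⋆, He(R(τ)A) − Σ R(τ), Kᵀ − Jᵀ], [⋆, ⋆, −2S]]`
is negative definite for all `τ ∈ T` if and only if
`𝔑(Ψ) = [[He((A+BK)W), −BK, BS − WKᵀ − Zᵀ], [⋆, He(R̂ΨA) − Σ R̂Ψ, Kᵀ − Jᵀ], [⋆, ⋆, −2S]]`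
is negative definite for every vertex `Ψ = ⊕ᵢ ψᵢ I_{nᵢ}` with `ψᵢ ∈ {1, e^{σᵢ T₂⁽ⁱ⁾}}`. -/
theorem statement8 (q m : ℕ) (hq : 0 < q) (nd : Fin q → ℕ) (hnd : ∀ i, 0 < nd i)
    (T2 : Fin q → ℝ) (hT2 : ∀ i, 0 < T2 i)
    (A : Matrix ((i : Fin q) × Fin (nd i)) ((i : Fin q) × Fin (nd i)) ℝ)
    (B : Matrix ((i : Fin q) × Fin (nd i)) (Fin m) ℝ)
    (K : Matrix (Fin m) ((i : Fin q) × Fin (nd i)) ℝ)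
    (W : Matrix ((i : Fin q) × Fin (nd i)) ((i : Fin q) × Fin (nd i)) ℝ) (hW : W.PosDef)
    (R : (i : Fin q) → Matrix (Fin (nd i)) (Fin (nd i)) ℝ) (hR : ∀ i, (R i).PosDef)
    (S : Matrix (Fin m) (Fin m) ℝ) (hSdiag : S.IsDiag) (hSpos : S.PosDef)
    (σ : Fin q → ℝ) (hσ : ∀ i, 0 < σ i)
    (Z J : Matrix (Fin m) ((i : Fin q) × Fin (nd i)) ℝ) :
    (∀ τ : Fin q → ℝ, (∀ i, τ i ∈ Set.Icc 0 (T2 i)) →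
      (-(Matrix.fromBlocks
          (Matrix.fromBlocks
            ((A + B * K) * W + ((A + B * K) * W)ᵀ)
            (-(B * K))
            (-(B * K))ᵀ
            (Rmat nd σ R τ * A + (Rmat nd σ R τ * A)ᵀ - Sig nd σ * Rmat nd σ R τ))
          (Matrix.fromRows (B * S - W * Kᵀ - Zᵀ) (Kᵀ - Jᵀ))
          (Matrix.fromRows (B * S - W * Kᵀ - Zᵀ) (Kᵀ - Jᵀ))ᵀ
          (-(2 : ℝ) • S))).PosDef) ↔
    (∀ ψ : Fin q → ℝ, (∀ i, ψ i = 1 ∨ ψ i = Real.exp (σ i * T2 i)) →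
      (-(Matrix.fromBlocks
          (Matrix.fromBlocks
            ((A + B * K) * W + ((A + B * K) * W)ᵀ)
            (-(B * K))
            (-(B * K))ᵀ
            ((Matrix.blockDiagonal' R *
                (Matrix.blockDiagonal' fun i =>
                  ψ i • (1 : Matrix (Fin (nd i)) (Fin (nd i)) ℝ)) * A) +
              (Matrix.blockDiagonal' R *
                (Matrix.blockDiagonal' fun i =>
                  ψ i • (1 : Matrix (Fin (nd i)) (Fin (nd i)) ℝ)) * A)ᵀ -
              Sig nd σ *
                (Matrix.blockDiagonal' R *
                  (Matrix.blockDiagonal' fun i =>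
                    ψ i • (1 : Matrix (Fin (nd i)) (Fin (nd i)) ℝ)))))
          (Matrix.fromRows (B * S - W * Kᵀ - Zᵀ) (Kᵀ - Jᵀ))
          (Matrix.fromRows (B * S - W * Kᵀ - Zᵀ) (Kᵀ - Jᵀ))ᵀ
          (-(2 : ℝ) • S))).PosDef) :=
  statement8_general q m nd T2 hT2 A B K W R S σ hσ Z J
end
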